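/- arXiv:1712.07099 — 5 statements merged into one kernel-verified Lean document; each statement's English description precedes it below -/
import Mathlib

section
/- Let k ≥ 1, let c > 1 be a real number, and let y_1, …, y_k be real numbers with y_1 ≥ 0 and y_i ≥ c·y_{i−1} for all i ∈ {2, …, k}. Then (∑_{i=1}^{k} i·y_i)·(∑_{j=1}^{k} c^j) ≥ (∑_{i=1}^{k} i·c^i)·(∑_{j=1}^{k} y_j). In particular, if ∑_{j=1}^{k} y_j > 0, then (∑_{i=1}^{k} i·y_i)/(∑_{i=1}^{k} y_i) ≥ (∑_{i=1}^{k} i·c^i)/(∑_{i=1}^{k} c^i). -/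
/-!
Writing `y i = a i * c ^ i`, the growth condition says that `a i = y i / c ^ i` is nondecreasing.
The inequality is then Chebyshev's sum inequality for the similarly ordered sequences `i` and `a i`
with weights `c ^ i`: the double sum `∑ i, ∑ j, c ^ i * c ^ j * (j - i) * (a j - a i)` is nonnegative
and equals twice the difference of the two sides.
-/

open Finset

theorem MonovaryOn.weighted_sum_mul_sum_le_sum_mul_sum {ι α : Type*}
    [CommRing α] [LinearOrder α] [IsStrictOrderedRing α] {s : Finset ι} {w f g : ι → α}
    (hw : ∀ i ∈ s, 0 ≤ w i) (hfg : MonovaryOn f g s) :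
    (∑ i ∈ s, w i * f i) * (∑ i ∈ s, w i * g i) ≤ (∑ i ∈ s, w i) * ∑ i ∈ s, w i * f i * g i := by
  have hdouble : ∑ i ∈ s, ∑ j ∈ s, w i * w j * ((f j - f i) * (g j - g i)) =
      2 * ((∑ i ∈ s, w i) * (∑ i ∈ s, w i * f i * g i) -
        (∑ i ∈ s, w i * f i) * ∑ i ∈ s, w i * g i) := by
    have hterm : ∀ i j, w i * w j * ((f j - f i) * (g j - g i)) =
        w i * (w j * f j * g j) - w i * f i * (w j * g j) - w i * g i * (w j * f j) +
          w i * f i * g i * w j := fun i j => by ring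
    simp only [hterm, sum_add_distrib, sum_sub_distrib, ← mul_sum, ← sum_mul]
    ring
  have hnonneg : 0 ≤ ∑ i ∈ s, ∑ j ∈ s, w i * w j * ((f j - f i) * (g j - g i)) :=
    sum_nonneg fun i hi => sum_nonneg fun j hj =>
      mul_nonneg (mul_nonneg (hw i hi) (hw j hj))
        (monovaryOn_iff_forall_mul_nonneg.mp hfg hi hj)
  linarith

theorem monotoneOn_div_pow_of_mul_le {c : ℝ} (hc : 0 < c) {y : ℕ → ℝ} {k : ℕ}
    (hy : ∀ i ∈ Icc 2 k, c * y (i - 1) ≤ y i) :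
    MonotoneOn (fun i => y i / c ^ i) (Icc 1 k : Set ℕ) := by
  refine monotoneOn_of_le_add_one (coe_Icc 1 k ▸ Set.ordConnected_Icc) fun i _ hi hi1 => ?_
  have hstep := hy (i + 1) (by simp only [coe_Icc, mem_Icc, Set.mem_Icc] at hi hi1 ⊢; omega)
  rw [Nat.add_sub_cancel] at hstep
  rw [div_le_div_iff₀ (pow_pos hc _) (pow_pos hc _), pow_succ]
  have := mul_le_mul_of_nonneg_right hstep (pow_pos hc i).le
  linarith

theorem stmt_5_general (k : ℕ) (c : ℝ) (hc : 1 < c) (y : ℕ → ℝ)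
    (hy : ∀ i ∈ Finset.Icc 2 k, y i ≥ c * y (i - 1)) :
    (∑ i ∈ Finset.Icc 1 k, (i : ℝ) * y i) * (∑ j ∈ Finset.Icc 1 k, c ^ j) ≥
      (∑ i ∈ Finset.Icc 1 k, (i : ℝ) * c ^ i) * (∑ j ∈ Finset.Icc 1 k, y j) ∧
    (0 < ∑ j ∈ Finset.Icc 1 k, y j →
      (∑ i ∈ Finset.Icc 1 k, (i : ℝ) * y i) / (∑ i ∈ Finset.Icc 1 k, y i) ≥
        (∑ i ∈ Finset.Icc 1 k, (i : ℝ) * c ^ i) / (∑ i ∈ Finset.Icc 1 k, c ^ i)) := by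
  have hc0 : 0 < c := one_pos.trans hc
  have hcancel : ∀ i : ℕ, c ^ i * (y i / c ^ i) = y i :=
    fun i => mul_div_cancel₀ _ (pow_ne_zero i hc0.ne')
  have hcheb := (Nat.mono_cast.monotoneOn _).monovaryOn (monotoneOn_div_pow_of_mul_le hc0 hy)
    |>.weighted_sum_mul_sum_le_sum_mul_sum (w := fun i => c ^ i) fun i _ => (pow_pos hc0 i).le
  have hmain : (∑ i ∈ Icc 1 k, (i : ℝ) * c ^ i) * ∑ j ∈ Icc 1 k, y j ≤
      (∑ i ∈ Icc 1 k, (i : ℝ) * y i) * ∑ j ∈ Icc 1 k, c ^ j := by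
    simpa only [mul_comm (c ^ _) (Nat.cast _ : ℝ), mul_assoc, hcancel,
      mul_comm (∑ j ∈ Icc 1 k, c ^ j)] using hcheb
  refine ⟨hmain, fun hpos => ?_⟩
  have hgeom : 0 < ∑ j ∈ Icc 1 k, c ^ j :=
    sum_pos (fun j _ => pow_pos hc0 j) (nonempty_of_sum_ne_zero hpos.ne')
  rwa [ge_iff_le, div_le_div_iff₀ hgeom hpos]

/-- For `k ≥ 1`, `c > 1`, and reals `y_1, …, y_k` with `y_1 ≥ 0` and
`y_i ≥ c·y_{i−1}` for `i ∈ {2, …, k}`: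
`(∑ i·y_i)·(∑ c^j) ≥ (∑ i·c^i)·(∑ y_j)`, and if `∑ y_j > 0` then
`(∑ i·y_i)/(∑ y_i) ≥ (∑ i·c^i)/(∑ c^i)`. -/
theorem stmt_5 (k : ℕ) (hk : 1 ≤ k) (c : ℝ) (hc : 1 < c) (y : ℕ → ℝ)
    (hy1 : 0 ≤ y 1) (hy : ∀ i ∈ Finset.Icc 2 k, y i ≥ c * y (i - 1)) :
    (∑ i ∈ Finset.Icc 1 k, (i : ℝ) * y i) * (∑ j ∈ Finset.Icc 1 k, c ^ j) ≥
      (∑ i ∈ Finset.Icc 1 k, (i : ℝ) * c ^ i) * (∑ j ∈ Finset.Icc 1 k, y j) ∧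
    (0 < ∑ j ∈ Finset.Icc 1 k, y j →
      (∑ i ∈ Finset.Icc 1 k, (i : ℝ) * y i) / (∑ i ∈ Finset.Icc 1 k, y i) ≥
        (∑ i ∈ Finset.Icc 1 k, (i : ℝ) * c ^ i) / (∑ i ∈ Finset.Icc 1 k, c ^ i)) :=
  stmt_5_general k c hc y hy
end

section
/- Let k ≥ 1, let ε > 0, and let x_1, …, x_k be real numbers with x_1 > 0 and x_i ≥ (2+ε)·x_{i−1} for all i ∈ {2, …, k}. Then (∑_{i=1}^{k} i·2^{-i}·x_i) / (∑_{i=1}^{k} 2^{-i}·x_i) ≥ k − 2/ε. -/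
/-!
Put `y i = 2⁻ⁱ xᵢ`; then `y (i+1) ≥ (1 + δ) y i` with `δ = ε/2`. For such geometrically growing
positive weights every partial sum is small against the next term, `δ · ∑_{i ≤ m} y i ≤ y (m+1)`,
and summing these tail bounds over `m` gives `δ · ∑ (k - i) y i ≤ ∑ y i`: the `y`-weighted mean
of `i` is at least `k - 1/δ`.
-/

open Finset

section GeometricGrowth

variable {y : ℕ → ℝ} {δ : ℝ}

lemma mul_sum_Icc_le_of_growth (hy1 : 0 ≤ y 1) :
    ∀ m : ℕ, (∀ i ∈ Icc 1 m, (1 + δ) * y i ≤ y (i + 1)) →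
      δ * ∑ i ∈ Icc 1 m, y i ≤ y (m + 1)
  | 0, _ => by simpa using hy1
  | m + 1, hy => by
    have ih := mul_sum_Icc_le_of_growth hy1 m fun i hi => hy i (Icc_subset_Icc_right m.le_succ hi)
    have hstep := hy (m + 1) (right_mem_Icc.mpr m.succ_pos)
    rw [sum_Icc_succ_top m.succ_pos, mul_add]
    linarith

lemma mul_sum_Icc_sub_mul_le_of_growth (hy1 : 0 ≤ y 1) :
    ∀ k : ℕ, (∀ i ∈ Ico 1 k, (1 + δ) * y i ≤ y (i + 1)) →
      δ * ∑ i ∈ Icc 1 k, ((k : ℝ) - i) * y i ≤ ∑ i ∈ Icc 1 k, y i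
  | 0, _ => by simp
  | k + 1, hy => by
    have ih := mul_sum_Icc_sub_mul_le_of_growth hy1 k fun i hi =>
      hy i (Ico_subset_Ico_right k.le_succ hi)
    have htail := mul_sum_Icc_le_of_growth hy1 k fun i hi =>
      hy i (by rwa [Ico_add_one_right_eq_Icc])
    have hsplit : ∑ i ∈ Icc 1 k, ((↑(k + 1) : ℝ) - i) * y i
        = ∑ i ∈ Icc 1 k, ((k : ℝ) - i) * y i + ∑ i ∈ Icc 1 k, y i := by
      rw [← sum_add_distrib]
      refine sum_congr rfl fun i _ => ?_
      push_cast
      ring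
    rw [sum_Icc_succ_top k.succ_pos, sum_Icc_succ_top k.succ_pos, sub_self, zero_mul, add_zero,
      hsplit]
    linarith

lemma pos_of_growth (hδ : 0 ≤ δ) (hy1 : 0 < y 1) {k : ℕ}
    (hy : ∀ i ∈ Ico 1 k, (1 + δ) * y i ≤ y (i + 1)) : ∀ i ∈ Icc 1 k, 0 < y i := by
  intro i hi
  obtain ⟨h1, hik⟩ := mem_Icc.mp hi
  induction i, h1 using Nat.le_induction with
  | base => exact hy1
  | succ n hn ih =>
    have hgrow := hy n (mem_Ico.mpr ⟨hn, hik⟩)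
    have := ih (mem_Icc.mpr ⟨hn, n.le_succ.trans hik⟩) (n.le_succ.trans hik)
    nlinarith

theorem sub_inv_le_sum_mul_div_sum_of_growth (hδ : 0 < δ) (hy1 : 0 < y 1) {k : ℕ} (hk : 1 ≤ k)
    (hy : ∀ i ∈ Ico 1 k, (1 + δ) * y i ≤ y (i + 1)) :
    (k : ℝ) - δ⁻¹ ≤ (∑ i ∈ Icc 1 k, (i : ℝ) * y i) / ∑ i ∈ Icc 1 k, y i := by
  have hsum_pos : 0 < ∑ i ∈ Icc 1 k, y i :=
    sum_pos (pos_of_growth hδ.le hy1 hy) ⟨1, mem_Icc.mpr ⟨le_rfl, hk⟩⟩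
  have hbound := mul_sum_Icc_sub_mul_le_of_growth hy1.le k hy
  have hexpand : ∑ i ∈ Icc 1 k, ((k : ℝ) - i) * y i
      = k * ∑ i ∈ Icc 1 k, y i - ∑ i ∈ Icc 1 k, (i : ℝ) * y i := by
    rw [mul_sum, ← sum_sub_distrib]
    exact sum_congr rfl fun i _ => by ring
  rw [le_div_iff₀ hsum_pos, sub_mul, ← div_eq_inv_mul, sub_le_iff_le_add, ← sub_le_iff_le_add',
    ← hexpand, le_div_iff₀' hδ]
  exact hbound

end GeometricGrowth

/-- For `k ≥ 1`, `ε > 0`, and reals `x_1, …, x_k` with `x_1 > 0` and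
`x_i ≥ (2+ε)·x_{i−1}` for all `i ∈ {2, …, k}`:
`(∑ i·2^{-i}·x_i) / (∑ 2^{-i}·x_i) ≥ k − 2/ε`. -/
theorem stmt_6 (k : ℕ) (hk : 1 ≤ k) (ε : ℝ) (hε : 0 < ε) (x : ℕ → ℝ)
    (hx1 : 0 < x 1) (hx : ∀ i ∈ Finset.Icc 2 k, x i ≥ (2 + ε) * x (i - 1)) :
    (∑ i ∈ Finset.Icc 1 k, (i : ℝ) * (2 : ℝ) ^ (-(i : ℤ)) * x i) /
        (∑ i ∈ Finset.Icc 1 k, (2 : ℝ) ^ (-(i : ℤ)) * x i) ≥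
      (k : ℝ) - 2 / ε := by
  have hgrowth : ∀ i ∈ Ico 1 k,
      (1 + ε / 2) * ((2 : ℝ) ^ (-(i : ℤ)) * x i) ≤ (2 : ℝ) ^ (-((i + 1 : ℕ) : ℤ)) * x (i + 1) := by
    intro i hi
    obtain ⟨h1, hik⟩ := mem_Ico.mp hi
    have hxi := hx (i + 1) (mem_Icc.mpr ⟨by omega, hik⟩)
    rw [Nat.add_sub_cancel] at hxi
    simp only [zpow_neg, zpow_natCast, pow_succ]
    have h2i : (0 : ℝ) < (2 ^ i)⁻¹ := by positivity
    field_simp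
    nlinarith
  have hmean := sub_inv_le_sum_mul_div_sum_of_growth (half_pos hε) (by positivity) hk hgrowth
  simpa only [← mul_assoc, inv_div] using hmean
end

section
/- Let k ≥ 1, let ε > 0, and let x_1, …, x_k be real numbers with x_1 > 0 and x_i ≥ (2+ε)·x_{i−1} for all i ∈ {2, …, k}. Then (∑_{i=1}^{k} ∑_{j=1}^{i} 2^{k-j}·x_j) / (∑_{i=1}^{k} 2^{k-i}·x_i) ≤ 1 + 2/ε. -/
/-! With `a i = 2 ^ (k - i) * x i` the growth condition says `a (i + 1) ≥ (1 + ε / 2) * a i`, so each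
prefix sum `∑_{j ≤ i} a j` is dominated by a geometric series ending in `a i` and is at most
`(1 + ε / 2) / (ε / 2) * a i = (1 + 2 / ε) * a i`. Summing over `i` bounds the numerator by
`1 + 2 / ε` times the denominator. -/

open Finset

section GeometricGrowth

variable {a : ℕ → ℝ} {r : ℝ} {m n : ℕ}

theorem nonneg_of_mul_le_succ (hm : 0 ≤ a m) (hr : 0 ≤ r)
    (ha : ∀ i ∈ Ico m n, r * a i ≤ a (i + 1)) : ∀ i ∈ Icc m n, 0 ≤ a i := by
  intro i hi
  obtain ⟨hmi, hin⟩ := mem_Icc.mp hi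
  induction i, hmi using Nat.le_induction with
  | base => exact hm
  | succ i hmi ih =>
    have hai := mul_nonneg hr (ih (mem_Icc.mpr ⟨hmi, by omega⟩) (by omega))
    exact hai.trans (ha i (mem_Ico.mpr ⟨hmi, by omega⟩))

theorem sub_one_mul_sum_Icc_le_mul (hm : 0 ≤ a m) (ha : ∀ i ∈ Ico m n, r * a i ≤ a (i + 1))
    (hmn : m ≤ n) : (r - 1) * ∑ j ∈ Icc m n, a j ≤ r * a n := by
  induction n, hmn using Nat.le_induction with
  | base => simp only [Icc_self, sum_singleton]; linarith
  | succ n hmn ih =>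
    have hstep := ha n (mem_Ico.mpr ⟨hmn, by omega⟩)
    have ih := ih fun i hi => ha i (Ico_subset_Ico_right n.le_succ hi)
    rw [sum_Icc_succ_top (by omega)]
    linarith

theorem sub_one_mul_sum_Icc_sum_Icc_le (hm : 0 ≤ a m) (ha : ∀ i ∈ Ico m n, r * a i ≤ a (i + 1)) :
    (r - 1) * ∑ i ∈ Icc m n, ∑ j ∈ Icc m i, a j ≤ r * ∑ i ∈ Icc m n, a i := by
  rw [mul_sum, mul_sum]
  refine sum_le_sum fun i hi => ?_
  obtain ⟨hmi, hin⟩ := mem_Icc.mp hi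
  exact sub_one_mul_sum_Icc_le_mul hm (fun j hj => ha j (Ico_subset_Ico_right hin hj)) hmi

end GeometricGrowth

theorem stmt_7_general (k : ℕ) (ε : ℝ) (hε : 0 < ε) (x : ℕ → ℝ)
    (hx1 : 0 < x 1) (hx : ∀ i ∈ Finset.Icc 2 k, x i ≥ (2 + ε) * x (i - 1)) :
    (∑ i ∈ Finset.Icc 1 k, ∑ j ∈ Finset.Icc 1 i, (2 : ℝ) ^ (k - j) * x j) /
        (∑ i ∈ Finset.Icc 1 k, (2 : ℝ) ^ (k - i) * x i) ≤ 1 + 2 / ε := by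
  set a : ℕ → ℝ := fun i => (2 : ℝ) ^ (k - i) * x i
  have ha1 : 0 ≤ a 1 := by positivity
  have ha : ∀ i ∈ Ico 1 k, (1 + ε / 2) * a i ≤ a (i + 1) := by
    intro i hi
    obtain ⟨hi1, hik⟩ := mem_Ico.mp hi
    have hxi := hx (i + 1) (mem_Icc.mpr ⟨by omega, hik⟩)
    rw [Nat.add_sub_cancel] at hxi
    have hpow : (2 : ℝ) ^ (k - i) = 2 * 2 ^ (k - (i + 1)) := by
      rw [← pow_succ']; congr 1; omega
    calc (1 + ε / 2) * a i = 2 ^ (k - (i + 1)) * ((2 + ε) * x i) := by simp only [a, hpow]; ring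
      _ ≤ a (i + 1) := mul_le_mul_of_nonneg_left hxi (by positivity)
  have hsum := sub_one_mul_sum_Icc_sum_Icc_le ha1 ha
  have hden : 0 ≤ ∑ i ∈ Icc 1 k, a i :=
    sum_nonneg (nonneg_of_mul_le_succ ha1 (by positivity) ha)
  refine div_le_of_le_mul₀ hden (by positivity) ?_
  calc ∑ i ∈ Icc 1 k, ∑ j ∈ Icc 1 i, a j
      = 2 / ε * ((1 + ε / 2 - 1) * ∑ i ∈ Icc 1 k, ∑ j ∈ Icc 1 i, a j) := by field_simp; ring
    _ ≤ 2 / ε * ((1 + ε / 2) * ∑ i ∈ Icc 1 k, a i) := by gcongr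
    _ = (1 + 2 / ε) * ∑ i ∈ Icc 1 k, a i := by field_simp; ring

/-- For `k ≥ 1`, `ε > 0`, and reals `x_1, …, x_k` with `x_1 > 0` and
`x_i ≥ (2+ε)·x_{i−1}` for all `i ∈ {2, …, k}`:
`(∑_{i=1}^{k} ∑_{j=1}^{i} 2^{k-j}·x_j) / (∑_{i=1}^{k} 2^{k-i}·x_i) ≤ 1 + 2/ε`. -/
theorem stmt_7 (k : ℕ) (hk : 1 ≤ k) (ε : ℝ) (hε : 0 < ε) (x : ℕ → ℝ)
    (hx1 : 0 < x 1) (hx : ∀ i ∈ Finset.Icc 2 k, x i ≥ (2 + ε) * x (i - 1)) :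
    (∑ i ∈ Finset.Icc 1 k, ∑ j ∈ Finset.Icc 1 i, (2 : ℝ) ^ (k - j) * x j) /
        (∑ i ∈ Finset.Icc 1 k, (2 : ℝ) ^ (k - i) * x i) ≤ 1 + 2 / ε :=
  stmt_7_general k ε hε x hx1 hx
end

section
/- Let k ≥ 1 and let x_1, …, x_k be real numbers satisfying: x_1 > 0; x_i ≥ 0 for all i ∈ {1, …, k}; and x_i ≤ 2·max_{j ∈ {1, …, i−1}} x_j for all i ∈ {2, …, k}. Then for every m ∈ {1, …, k}, (∑_{i=1}^{m} 2^{-i}·x_i) / (∑_{i=1}^{k} 2^{-i}·x_i) ≥ m/k. -/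
/-!
Put `y i = 2⁻ⁱ xᵢ` and `Sₙ = y₁ + ⋯ + yₙ`, and let `uₙ = 2⁻ⁿ max_{j ≤ n} xⱼ`. The growth
hypothesis says `yᵢ₊₁ ≤ uᵢ`; it also makes `u` nonincreasing, and an induction shows
`n uₙ ≤ Sₙ`. Hence every term after the `m`-th is at most `uₘ ≤ Sₘ / m`, so the averages
`Sₙ / n` cannot increase past `n = m`, which gives `Sₘ / Sₖ ≥ m / k`.
-/

open Finset

theorem mul_sum_Icc_le_mul_sum_Icc {y : ℕ → ℝ} {m n : ℕ} (hmn : m ≤ n)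
    (h : ∀ i, m ≤ i → i < n → m * y (i + 1) ≤ ∑ j ∈ Icc 1 m, y j) :
    m * ∑ j ∈ Icc 1 n, y j ≤ n * ∑ j ∈ Icc 1 m, y j := by
  induction n, hmn using Nat.le_induction with
  | base => exact le_rfl
  | succ n hmn ih =>
    rw [sum_Icc_succ_top (by omega)]
    push_cast
    linarith [ih fun i hmi hin => h i hmi (by omega), h n hmn (by omega)]

/-- For nonnegative `y` this is `max_{1 ≤ j ≤ n} y j / 2 ^ (n - j)`; with `y j = 2⁻ʲ xⱼ` it is
`2⁻ⁿ max_{j ≤ n} xⱼ`. -/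
noncomputable def decayingMax (y : ℕ → ℝ) : ℕ → ℝ
  | 0 => 0
  | n + 1 => max (decayingMax y n / 2) (y (n + 1))

namespace decayingMax

variable {y : ℕ → ℝ}

theorem nonneg (y : ℕ → ℝ) (n : ℕ) : 0 ≤ decayingMax y n := by
  induction n with
  | zero => exact le_rfl
  | succ n ih => exact le_max_of_le_left (div_nonneg ih zero_le_two)

theorem div_pow_le {j n : ℕ} (hj : 1 ≤ j) (hjn : j ≤ n) :
    y j / 2 ^ (n - j) ≤ decayingMax y n := by
  induction n, hjn using Nat.le_induction with
  | base =>
    obtain ⟨j, rfl⟩ := Nat.exists_eq_add_of_le' hj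
    simp [decayingMax]
  | succ n hjn ih =>
    rw [Nat.sub_add_comm hjn, pow_succ, ← div_div]
    exact (div_le_div_of_nonneg_right ih zero_le_two).trans (le_max_left _ _)

theorem succ_le {n : ℕ} (h : y (n + 1) ≤ decayingMax y n) :
    decayingMax y (n + 1) ≤ decayingMax y n :=
  max_le (half_le_self_iff.mpr (nonneg y n)) h

theorem antitoneOn {n : ℕ} (h : ∀ i, 1 ≤ i → i < n → y (i + 1) ≤ decayingMax y i) :
    AntitoneOn (decayingMax y) (Set.Icc 1 n) :=
  antitoneOn_of_succ_le Set.ordConnected_Icc fun i _ hi hsi =>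
    succ_le (h i hi.1 (Order.succ_le_iff.mp hsi.2))

theorem mul_le_sum {n : ℕ} (hy : ∀ i ∈ Icc 1 n, 0 ≤ y i)
    (h : ∀ i, 1 ≤ i → i < n → y (i + 1) ≤ decayingMax y i) :
    n * decayingMax y n ≤ ∑ i ∈ Icc 1 n, y i := by
  induction n with
  | zero => simp [decayingMax]
  | succ n ih =>
    have ih := ih (fun i hi => hy i (Icc_subset_Icc_right n.le_succ hi))
      fun i hi hin => h i hi (by omega)
    have hyn : 0 ≤ y (n + 1) := hy (n + 1) (by simp)
    have hD := nonneg y n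
    rw [sum_Icc_succ_top (by omega), decayingMax, mul_max_of_nonneg _ _ (by positivity)]
    push_cast
    rcases Nat.eq_zero_or_pos n with rfl | hn
    · simpa [decayingMax] using hyn
    have hgrowth : (n : ℝ) * y (n + 1) ≤ n * decayingMax y n :=
      mul_le_mul_of_nonneg_left (h n hn (by omega)) (by positivity)
    have hn : (1 : ℝ) ≤ n := by exact_mod_cast hn
    refine max_le ?_ ?_ <;> nlinarith

end decayingMax

theorem mul_sum_Icc_le_mul_sum_Icc_of_le_decayingMax {y : ℕ → ℝ} {m n : ℕ}
    (hy : ∀ i ∈ Icc 1 m, 0 ≤ y i) (h : ∀ i, 1 ≤ i → i < n → y (i + 1) ≤ decayingMax y i)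
    (hm : 1 ≤ m) (hmn : m ≤ n) :
    m * ∑ j ∈ Icc 1 n, y j ≤ n * ∑ j ∈ Icc 1 m, y j :=
  mul_sum_Icc_le_mul_sum_Icc hmn fun i hmi hin => calc
    (m : ℝ) * y (i + 1) ≤ m * decayingMax y i :=
      mul_le_mul_of_nonneg_left (h i (by omega) hin) (by positivity)
    _ ≤ m * decayingMax y m :=
      mul_le_mul_of_nonneg_left
        (decayingMax.antitoneOn h ⟨hm, hmn⟩ ⟨hm.trans hmi, hin.le⟩ hmi) (by positivity)
    _ ≤ ∑ j ∈ Icc 1 m, y j := decayingMax.mul_le_sum hy fun j hj hjm => h j hj (by omega)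

theorem zpow_neg_mul_le_decayingMax {x : ℕ → ℝ} {i : ℕ} (hne : (Icc 1 i).Nonempty)
    (hx : x (i + 1) ≤ 2 * (Icc 1 i).sup' hne x) :
    (2 : ℝ) ^ (-((i + 1 : ℕ) : ℤ)) * x (i + 1) ≤
      decayingMax (fun j => (2 : ℝ) ^ (-(j : ℤ)) * x j) i := by
  obtain ⟨j, hj, hxj⟩ := exists_mem_eq_sup' hne x
  obtain ⟨hj1, hji⟩ := mem_Icc.mp hj
  refine le_trans ?_ (decayingMax.div_pow_le hj1 hji)
  obtain ⟨d, rfl⟩ := Nat.exists_eq_add_of_le hji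
  rw [hxj] at hx
  simp only [zpow_neg, zpow_natCast, Nat.add_sub_cancel_left, pow_add, pow_succ]
  field_simp
  linarith

/-- For `k ≥ 1` and reals `x_1, …, x_k` with `x_1 > 0`, `x_i ≥ 0` for all
`i ∈ {1, …, k}`, and `x_i ≤ 2·max_{j ∈ {1, …, i−1}} x_j` for `i ∈ {2, …, k}`,
for every `m ∈ {1, …, k}`:
`(∑_{i=1}^{m} 2^{-i}·x_i) / (∑_{i=1}^{k} 2^{-i}·x_i) ≥ m/k`. -/
theorem stmt_8 (k : ℕ) (x : ℕ → ℝ)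
    (hx1 : 0 < x 1) (hx0 : ∀ i ∈ Finset.Icc 1 k, 0 ≤ x i)
    (hx2 : ∀ i, ∀ h2 : 2 ≤ i, i ≤ k →
      x i ≤ 2 * (Finset.Icc 1 (i - 1)).sup' (Finset.nonempty_Icc.mpr (by omega)) x)
    (m : ℕ) (hm : m ∈ Finset.Icc 1 k) :
    (∑ i ∈ Finset.Icc 1 m, (2 : ℝ) ^ (-(i : ℤ)) * x i) /
        (∑ i ∈ Finset.Icc 1 k, (2 : ℝ) ^ (-(i : ℤ)) * x i) ≥
      (m : ℝ) / (k : ℝ) := by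
  obtain ⟨hm1, hmk⟩ := mem_Icc.mp hm
  have hy : ∀ i ∈ Icc 1 k, 0 ≤ (2 : ℝ) ^ (-(i : ℤ)) * x i :=
    fun i hi => mul_nonneg (by positivity) (hx0 i hi)
  have hS : 0 < ∑ i ∈ Icc 1 k, (2 : ℝ) ^ (-(i : ℤ)) * x i :=
    sum_pos' hy ⟨1, mem_Icc.mpr ⟨le_rfl, by omega⟩, by positivity⟩
  rw [ge_iff_le, div_le_div_iff₀ (by norm_cast; omega) hS, mul_comm _ (k : ℝ)]
  exact mul_sum_Icc_le_mul_sum_Icc_of_le_decayingMax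
    (fun i hi => hy i (Icc_subset_Icc_right hmk hi))
    (fun i hi hik =>
      zpow_neg_mul_le_decayingMax (nonempty_Icc.mpr hi) (hx2 (i + 1) (by omega) hik))
    hm1 hmk
end

section
/- Let m ≥ 1 and let x_1, …, x_m be real numbers satisfying: x_1 > 0; x_i ≥ 0 for all i ∈ {1, …, m}; and x_i ≤ 2·max_{j ∈ {1, …, i−1}} x_j for all i ∈ {2, …, m}. Then ∑_{i=1}^{m} 2^{m-i}·x_i ≥ m · max_{i ∈ {1, …, m}} x_i. -/
/-!
With `S n = ∑_{i ≤ n} 2^(n-i) x_i` and `M n = max_{i ≤ n} x_i` we have `S (n+1) = 2 S n + x_{n+1}` and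
`M (n+1) = max (M n) x_{n+1}`, so `n M n ≤ S n` propagates by induction: if `x_{n+1} ≤ M n` the doubling
`2 n M n ≥ (n+1) M n` suffices, and otherwise `x_{n+1} ≤ 2 M n` gives `2 n M n ≥ n x_{n+1}`.
-/

open Finset

lemma succ_mul_max_le_two_mul_add {n M S y : ℝ} (hn : 1 ≤ n) (hM : 0 ≤ M) (hS : n * M ≤ S)
    (hy₀ : 0 ≤ y) (hy : y ≤ 2 * M) : (n + 1) * max M y ≤ 2 * S + y := by
  rcases le_total y M with hyM | hMy
  · rw [max_eq_left hyM]
    nlinarith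
  · rw [max_eq_right hMy]
    nlinarith

lemma sum_Icc_two_pow_sub_mul_succ (x : ℕ → ℝ) (n : ℕ) :
    ∑ i ∈ Icc 1 (n + 1), (2 : ℝ) ^ (n + 1 - i) * x i =
      2 * ∑ i ∈ Icc 1 n, (2 : ℝ) ^ (n - i) * x i + x (n + 1) := by
  rw [sum_Icc_succ_top (by omega), mul_sum, Nat.sub_self, pow_zero, one_mul]
  congr 1
  refine sum_congr rfl fun i hi => ?_
  rw [Nat.sub_add_comm (mem_Icc.mp hi).2, pow_succ]
  ring

lemma sup'_Icc_add_one_right {α : Type*} [LinearOrder α] (x : ℕ → α) {a n : ℕ} (h : a ≤ n)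
    (h' : (Icc a (n + 1)).Nonempty) :
    (Icc a (n + 1)).sup' h' x = max ((Icc a n).sup' (nonempty_Icc.mpr h) x) (x (n + 1)) := by
  rw [max_comm, ← sup'_insert]
  exact sup'_congr _ (insert_Icc_right_eq_Icc_add_one (by omega)).symm fun _ _ => rfl

/-- For `m ≥ 1` and reals `x_1, …, x_m` with `x_1 > 0`, `x_i ≥ 0` for all
`i ∈ {1, …, m}`, and `x_i ≤ 2·max_{j ∈ {1, …, i−1}} x_j` for `i ∈ {2, …, m}`:
`∑_{i=1}^{m} 2^{m-i}·x_i ≥ m · max_{i ∈ {1, …, m}} x_i`. -/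
theorem stmt_10 (m : ℕ) (hm : 1 ≤ m) (x : ℕ → ℝ)
    (hx0 : ∀ i ∈ Finset.Icc 1 m, 0 ≤ x i)
    (hx2 : ∀ i, ∀ h2 : 2 ≤ i, i ≤ m →
      x i ≤ 2 * (Finset.Icc 1 (i - 1)).sup' (Finset.nonempty_Icc.mpr (by omega)) x) :
    ∑ i ∈ Finset.Icc 1 m, (2 : ℝ) ^ (m - i) * x i ≥
      (m : ℝ) * (Finset.Icc 1 m).sup' (Finset.nonempty_Icc.mpr hm) x := by
  induction m, hm using Nat.le_induction with
  | base => simp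
  | succ n hn ih =>
    have hM : 0 ≤ (Icc 1 n).sup' (nonempty_Icc.mpr hn) x :=
      (hx0 1 (by simp)).trans (le_sup' x (by simp [hn]))
    rw [ge_iff_le, sum_Icc_two_pow_sub_mul_succ, sup'_Icc_add_one_right x hn, Nat.cast_succ]
    refine succ_mul_max_le_two_mul_add (by exact_mod_cast hn) hM ?_ (hx0 _ (by simp)) ?_
    · exact ih (fun i hi => hx0 i (by simp at hi ⊢; omega)) (fun i h2 hi => hx2 i h2 (by omega))
    · simpa using hx2 (n + 1) (by omega) le_rfl
end
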